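/- Let P be a convex polygon in ℝ² with at least 4 edges, arising as a bounded cell of a simple arrangement of lines. Then at most 2 edges of P are 'critical', where an edge is critical if it is adjacent to an unbounded cell of the subarrangement formed by the lines supporting the edges of P. Equivalently: in the arrangement of the k ≥ 4 lines supporting the edges of a convex k-gon cell, at most 2 of the polygon's edges border unbounded cells. -/

import Mathlib

/-!
A cell of the arrangement is the set of points lying on prescribed sides of all the lines. If the
cell `C` beyond a critical edge of `P` on the line `ℓ` is unbounded, it has a recession direction
`d`. Since `C` lies on the same side as `P` of every line other than `ℓ`, a ray from `P` in
direction `d` can leave `P` only through `ℓ`, and as `P` is bounded it does. Distinct critical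
edges lie on distinct lines, so three of them give directions `d₁, d₂, d₃` escaping through three
distinct sides. In the plane `[d₂,d₃] d₁ + [d₃,d₁] d₂ + [d₁,d₂] d₃ = 0`, the brackets being cross
products, which are nonzero since the remaining normals are not parallel. Testing this identity
against the inward normal of the side `dᵢ` escapes through shows that the brackets cannot have
mixed signs; testing it against the normal of a fourth line shows that they cannot have a common
sign either.
-/

open Set

/-- A line in the real plane `ℝ × ℝ`, given by the equation `a*x + b*y = c`
with `(a, b) ≠ (0, 0)`. -/
structure Line2 where
  a : ℝ
  b : ℝ
  c : ℝ
  nondeg : (a, b) ≠ (0, 0)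

/-- The set of points of a line. -/
def Line2.carrier (ℓ : Line2) : Set (ℝ × ℝ) :=
  {p | ℓ.a * p.1 + ℓ.b * p.2 = ℓ.c}

/-- Two lines are parallel if their normal vectors are proportional
(this includes the case of equal lines). -/
def Line2.Parallel (ℓ₁ ℓ₂ : Line2) : Prop :=
  ℓ₁.a * ℓ₂.b = ℓ₂.a * ℓ₁.b

/-- A simple arrangement: a finite set of lines, pairwise non-parallel,
no point on three (or more) of the lines. -/
def IsSimpleArrangement (L : Finset Line2) : Prop :=
  (∀ ℓ₁ ∈ L, ∀ ℓ₂ ∈ L, ℓ₁ ≠ ℓ₂ → ¬ Line2.Parallel ℓ₁ ℓ₂) ∧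
  (∀ ℓ₁ ∈ L, ∀ ℓ₂ ∈ L, ∀ ℓ₃ ∈ L, ℓ₁ ≠ ℓ₂ → ℓ₁ ≠ ℓ₃ → ℓ₂ ≠ ℓ₃ →
    ∀ p : ℝ × ℝ, ¬(p ∈ ℓ₁.carrier ∧ p ∈ ℓ₂.carrier ∧ p ∈ ℓ₃.carrier))

/-- The union of the lines of an arrangement. -/
def linesUnion (L : Finset Line2) : Set (ℝ × ℝ) := ⋃ ℓ ∈ L, ℓ.carrier

/-- A cell of the arrangement determined by a closed set `S` of "forbidden" points:
a connected component of the complement of `S`. -/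
def IsCellOf (S : Set (ℝ × ℝ)) (C : Set (ℝ × ℝ)) : Prop :=
  ∃ x, x ∉ S ∧ C = connectedComponentIn Sᶜ x

/-- A cell of a line arrangement: a connected component of the complement of the
union of the lines. -/
def IsCell (L : Finset Line2) (C : Set (ℝ × ℝ)) : Prop :=
  IsCellOf (linesUnion L) C

/-- A set is a (closed, nondegenerate) triangle. -/
def IsTriangleSet (T : Set (ℝ × ℝ)) : Prop :=
  ∃ u v w : ℝ × ℝ, ¬ Collinear ℝ ({u, v, w} : Set (ℝ × ℝ)) ∧
    T = convexHull ℝ ({u, v, w} : Set (ℝ × ℝ))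

/-- An edge of (the closure of) a polygonal region `P`: a maximal nondegenerate
segment contained in the frontier of `P`. -/
def IsEdge (P : Set (ℝ × ℝ)) (e : Set (ℝ × ℝ)) : Prop :=
  ∃ x y : ℝ × ℝ, x ≠ y ∧ e = segment ℝ x y ∧ e ⊆ frontier P ∧
    ∀ x' y' : ℝ × ℝ, e ⊆ segment ℝ x' y' → segment ℝ x' y' ⊆ frontier P →
      segment ℝ x' y' = e

/-- An edge `e` of a cell `P` of the arrangement `L` is critical if the cell on
the other side of `e` (an unbounded cell having `e` in its closure) is
unbounded. -/
def CriticalEdge (L : Finset Line2) (P e : Set (ℝ × ℝ)) : Prop :=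
  IsEdge (closure P) e ∧
    ∃ C : Set (ℝ × ℝ), IsCell L C ∧ ¬ Bornology.IsBounded C ∧ e ⊆ closure C
open Filter Topology

def dot2 (u : ℝ × ℝ) : ℝ × ℝ →L[ℝ] ℝ :=
  u.1 • ContinuousLinearMap.fst ℝ ℝ ℝ + u.2 • ContinuousLinearMap.snd ℝ ℝ ℝ

@[simp]
lemma dot2_apply (u v : ℝ × ℝ) : dot2 u v = u.1 * v.1 + u.2 * v.2 := by
  simp [dot2]

def cross2 (u v : ℝ × ℝ) : ℝ := u.1 * v.2 - u.2 * v.1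

lemma dot2_comm (u v : ℝ × ℝ) : dot2 u v = dot2 v u := by
  simp only [dot2_apply]; ring

lemma dot2_self_pos {u : ℝ × ℝ} (hu : u ≠ 0) : 0 < dot2 u u := by
  have : u.1 ≠ 0 ∨ u.2 ≠ 0 := by
    contrapose! hu
    exact Prod.ext hu.1 hu.2
  rcases this with h | h <;> simp only [dot2_apply] <;>
    nlinarith [mul_self_pos.2 h, mul_self_nonneg u.1, mul_self_nonneg u.2]

lemma dot2_smul_left (t : ℝ) (u v : ℝ × ℝ) : dot2 (t • u) v = t * dot2 u v := by
  simp only [dot2_apply, Prod.smul_fst, Prod.smul_snd, smul_eq_mul]; ring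

lemma cross2_smul_smul (s t : ℝ) (u v : ℝ × ℝ) :
    cross2 (s • u) (t • v) = s * t * cross2 u v := by
  simp only [cross2, Prod.smul_fst, Prod.smul_snd, smul_eq_mul]; ring

lemma cross2_mul_dot2_add (d₁ d₂ d₃ w : ℝ × ℝ) :
    cross2 d₂ d₃ * dot2 w d₁ + cross2 d₃ d₁ * dot2 w d₂ + cross2 d₁ d₂ * dot2 w d₃ = 0 := by
  simp only [cross2, dot2_apply]; ring

lemma cross2_eq_zero_of_dot2_eq_zero {u v d : ℝ × ℝ} (hd : d ≠ 0)
    (hu : dot2 u d = 0) (hv : dot2 v d = 0) : cross2 u v = 0 := by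
  have h := cross2_mul_dot2_add u v d d
  rw [dot2_comm d u, dot2_comm d v, hu, hv] at h
  simpa [(dot2_self_pos hd).ne', -dot2_apply] using h

lemma eq_zero_of_dot2_eq_zero {d₁ d₂ w : ℝ × ℝ} (hd : cross2 d₁ d₂ ≠ 0)
    (h₁ : dot2 w d₁ = 0) (h₂ : dot2 w d₂ = 0) : w = 0 := by
  have e₁ := cross2_mul_dot2_add d₁ d₂ (1, 0) w
  have e₂ := cross2_mul_dot2_add d₁ d₂ (0, 1) w
  rw [h₁, h₂] at e₁ e₂
  simp only [dot2_apply, mul_zero, zero_add, mul_one, mul_eq_zero] at e₁ e₂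
  exact Prod.ext (by simpa [hd] using e₁) (by simpa [hd] using e₂)

lemma exists_eq_smul_of_cross2_eq_zero {u v : ℝ × ℝ} (hu : u ≠ 0) (h : cross2 u v = 0) :
    ∃ t : ℝ, v = t • u := by
  have hpos := dot2_self_pos hu
  refine ⟨dot2 u v / dot2 u u, Prod.ext ?_ ?_⟩ <;>
    simp only [Prod.smul_fst, Prod.smul_snd, smul_eq_mul] <;>
    rw [div_mul_eq_mul_div, eq_div_iff hpos.ne'] <;>
    simp only [cross2, dot2_apply] at h ⊢
  · linear_combination (-u.2) * h
  · linear_combination u.1 * h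

namespace Line2

def normal (ℓ : Line2) : ℝ × ℝ := (ℓ.a, ℓ.b)

def eval (ℓ : Line2) (p : ℝ × ℝ) : ℝ := dot2 ℓ.normal p - ℓ.c

variable (ℓ : Line2)

lemma normal_ne_zero : ℓ.normal ≠ 0 := by
  simpa [normal, Prod.ext_iff] using ℓ.nondeg

lemma mem_carrier_iff {p : ℝ × ℝ} : p ∈ ℓ.carrier ↔ ℓ.eval p = 0 := by
  simp [carrier, eval, normal, sub_eq_zero]

lemma continuous_eval : Continuous ℓ.eval :=
  (dot2 ℓ.normal).continuous.sub continuous_const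

lemma eval_add_smul (p d : ℝ × ℝ) (t : ℝ) :
    ℓ.eval (p + t • d) = ℓ.eval p + t * dot2 ℓ.normal d := by
  simp only [eval, map_add, map_smul, smul_eq_mul]; ring

lemma eval_sub_eval (p q : ℝ × ℝ) : ℓ.eval p - ℓ.eval q = dot2 ℓ.normal (p - q) := by
  simp only [eval, map_sub]; ring

lemma eval_add_add {a b : ℝ} (hab : a + b = 1) (p q : ℝ × ℝ) :
    ℓ.eval (a • p + b • q) = a * ℓ.eval p + b * ℓ.eval q := by
  simp only [eval, map_add, map_smul, smul_eq_mul]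
  linear_combination ℓ.c * hab

lemma eval_lineMap (p q : ℝ × ℝ) (t : ℝ) :
    ℓ.eval (AffineMap.lineMap p q t) = (1 - t) * ℓ.eval p + t * ℓ.eval q := by
  rw [AffineMap.lineMap_apply_module, ℓ.eval_add_add (by ring)]

lemma convex_carrier : Convex ℝ ℓ.carrier := by
  intro p hp q hq a b _ _ hab
  rw [mem_carrier_iff] at hp hq ⊢
  rw [ℓ.eval_add_add hab, hp, hq]; ring

variable {ℓ} {m : Line2} {x y : ℝ × ℝ}

lemma cross2_normal_ne_zero (h : ¬ ℓ.Parallel m) : cross2 ℓ.normal m.normal ≠ 0 := by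
  contrapose! h
  simp only [cross2, normal] at h
  unfold Parallel
  linarith

lemma dot2_normal_sub_eq_zero (hx : x ∈ ℓ.carrier) (hy : y ∈ ℓ.carrier) :
    dot2 (y - x) ℓ.normal = 0 := by
  rw [mem_carrier_iff] at hx hy
  rw [dot2_comm, ← eval_sub_eval, hx, hy, sub_zero]

lemma parallel_of_mem_of_mem (hxy : x ≠ y) (hxℓ : x ∈ ℓ.carrier) (hyℓ : y ∈ ℓ.carrier)
    (hxm : x ∈ m.carrier) (hym : y ∈ m.carrier) : ℓ.Parallel m := by
  have h := cross2_eq_zero_of_dot2_eq_zero (sub_ne_zero.2 hxy.symm)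
    (by rw [dot2_comm]; exact dot2_normal_sub_eq_zero hxℓ hyℓ)
    (by rw [dot2_comm]; exact dot2_normal_sub_eq_zero hxm hym)
  simp only [cross2, normal] at h
  unfold Parallel
  linarith

lemma exists_lineMap_eq (hxy : x ≠ y) (hx : x ∈ ℓ.carrier) (hy : y ∈ ℓ.carrier) {z : ℝ × ℝ}
    (hz : z ∈ ℓ.carrier) : ∃ t : ℝ, AffineMap.lineMap x y t = z := by
  obtain ⟨t, ht⟩ := exists_eq_smul_of_cross2_eq_zero (sub_ne_zero.2 hxy.symm)
    (cross2_eq_zero_of_dot2_eq_zero ℓ.normal_ne_zero (dot2_normal_sub_eq_zero hx hy)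
      (dot2_normal_sub_eq_zero hx hz))
  refine ⟨t, ?_⟩
  rw [AffineMap.lineMap_apply_module', ← ht, sub_add_cancel]

end Line2

lemma mem_linesUnion {L : Finset Line2} {p : ℝ × ℝ} :
    p ∈ linesUnion L ↔ ∃ ℓ ∈ L, ℓ.eval p = 0 := by
  simp [linesUnion, Line2.mem_carrier_iff]

lemma Line2.eval_ne_zero {L : Finset Line2} {ℓ : Line2} (hℓ : ℓ ∈ L) {p : ℝ × ℝ}
    (hp : p ∉ linesUnion L) : ℓ.eval p ≠ 0 :=
  fun h => hp (mem_linesUnion.2 ⟨ℓ, hℓ, h⟩)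

/-- For `x` off the lines, the cell of `x` (`connectedComponentIn_compl_linesUnion`). -/
def sameSide (L : Finset Line2) (x : ℝ × ℝ) : Set (ℝ × ℝ) :=
  {p | ∀ ℓ ∈ L, 0 < ℓ.eval x * ℓ.eval p}

section sameSide

variable {L : Finset Line2} {x : ℝ × ℝ}

lemma isOpen_sameSide : IsOpen (sameSide L x) := by
  simp only [sameSide, ofPred_forall]
  exact isOpen_biInter_finset fun ℓ _ =>
    isOpen_lt continuous_const (continuous_const.mul ℓ.continuous_eval)

lemma convex_sameSide : Convex ℝ (sameSide L x) := by
  intro p hp q hq a b ha hb hab ℓ hℓ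
  have hp := hp ℓ hℓ
  have hq := hq ℓ hℓ
  rw [ℓ.eval_add_add hab]
  rcases ha.lt_or_eq with ha | rfl
  · nlinarith [mul_pos ha hp, mul_nonneg hb hq.le]
  · simp_all

lemma mem_sameSide_self (hx : x ∉ linesUnion L) : x ∈ sameSide L x :=
  fun ℓ hℓ => mul_self_pos.2 (ℓ.eval_ne_zero hℓ hx)

lemma sameSide_subset_compl : sameSide L x ⊆ (linesUnion L)ᶜ := by
  intro p hp hpL
  obtain ⟨ℓ, hℓ, h⟩ := mem_linesUnion.1 hpL
  simpa [h] using hp ℓ hℓ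

lemma connectedComponentIn_compl_linesUnion (hx : x ∉ linesUnion L) :
    connectedComponentIn (linesUnion L)ᶜ x = sameSide L x := by
  refine Subset.antisymm (fun p hp ℓ hℓ => ?_) ?_
  · by_contra! hle
    obtain ⟨z, hz, hz0⟩ := isPreconnected_connectedComponentIn.intermediate_value hp
      (mem_connectedComponentIn hx) (continuous_const.mul ℓ.continuous_eval).continuousOn
      (show (0 : ℝ) ∈ Icc (ℓ.eval x * ℓ.eval p) (ℓ.eval x * ℓ.eval x) from
        ⟨hle, (mul_self_pos.2 (ℓ.eval_ne_zero hℓ hx)).le⟩)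
    have hzL : z ∉ linesUnion L := connectedComponentIn_subset _ _ hz
    exact mul_ne_zero (ℓ.eval_ne_zero hℓ hx) (ℓ.eval_ne_zero hℓ hzL) hz0
  · exact convex_sameSide.isPreconnected.subset_connectedComponentIn (mem_sameSide_self hx)
      sameSide_subset_compl

lemma closure_sameSide_subset :
    closure (sameSide L x) ⊆ {p | ∀ ℓ ∈ L, 0 ≤ ℓ.eval x * ℓ.eval p} := by
  refine closure_minimal (fun p hp ℓ hℓ => (hp ℓ hℓ).le) ?_
  simp only [ofPred_forall]
  exact isClosed_biInter fun ℓ _ =>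
    isClosed_le continuous_const (continuous_const.mul ℓ.continuous_eval)

lemma mul_eval_pos_of_mem_closure (hx : x ∉ linesUnion L) {ℓ : Line2} (hℓ : ℓ ∈ L)
    {p : ℝ × ℝ} (hp : p ∈ closure (sameSide L x)) (hpℓ : ℓ.eval p ≠ 0) :
    0 < ℓ.eval x * ℓ.eval p :=
  (closure_sameSide_subset hp ℓ hℓ).lt_of_ne (mul_ne_zero (ℓ.eval_ne_zero hℓ hx) hpℓ).symm

lemma frontier_closure_sameSide_subset (hx : x ∉ linesUnion L) :
    frontier (closure (sameSide L x)) ⊆ linesUnion L := by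
  intro p hp
  by_contra hpL
  rw [frontier, closure_closure] at hp
  refine hp.2 (interior_maximal subset_closure isOpen_sameSide fun ℓ hℓ => ?_)
  exact mul_eval_pos_of_mem_closure hx hℓ hp.1 (ℓ.eval_ne_zero hℓ hpL)

/-- Moving off `ℓ` to the far side of `x` leaves the closed cell, so no point of `ℓ` is interior. -/
lemma closure_sameSide_inter_carrier_subset_frontier (hx : x ∉ linesUnion L) {ℓ : Line2}
    (hℓ : ℓ ∈ L) : closure (sameSide L x) ∩ ℓ.carrier ⊆ frontier (closure (sameSide L x)) := by
  rintro p ⟨hp, hpℓ⟩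
  refine ⟨by rwa [closure_closure], fun hint => ?_⟩
  have hlim : Tendsto (fun t : ℝ => p - t • (ℓ.eval x • ℓ.normal)) (𝓝[>] 0) (𝓝 p) :=
    ((continuous_const.sub (continuous_id.smul continuous_const)).tendsto' 0 p
      (by simp)).mono_left nhdsWithin_le_nhds
  obtain ⟨t, htK, ht⟩ := ((hlim.eventually (isOpen_interior.mem_nhds hint)).and
    self_mem_nhdsWithin).exists
  have hle := closure_sameSide_subset (interior_subset htK) ℓ hℓ
  rw [sub_eq_add_neg, ← neg_smul, ℓ.eval_add_smul, (ℓ.mem_carrier_iff).1 hpℓ, map_smul,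
    smul_eq_mul] at hle
  have hσ := mul_self_pos.2 (ℓ.eval_ne_zero hℓ hx)
  nlinarith [mul_pos (mul_pos (mem_Ioi.1 ht) hσ) (dot2_self_pos ℓ.normal_ne_zero)]

end sameSide

section Recession

variable {E : Type*} [NormedAddCommGroup E] [NormedSpace ℝ E] {S : Set E}

lemma not_isBounded_of_forall_add_smul_mem {x d : E} (hd : d ≠ 0)
    (h : ∀ t : ℝ, 0 ≤ t → x + t • d ∈ S) : ¬ Bornology.IsBounded S := by
  intro hS
  obtain ⟨C, hC⟩ := isBounded_iff_forall_norm_le.1 hS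
  have hdpos : 0 < ‖d‖ := norm_pos_iff.2 hd
  set t := (|C| + ‖x‖ + 1) / ‖d‖
  have ht : 0 ≤ t := by positivity
  have htd : ‖t • d‖ = |C| + ‖x‖ + 1 := by
    rw [norm_smul, Real.norm_of_nonneg ht, div_mul_cancel₀ _ hdpos.ne']
  have := norm_sub_le_of_le (hC _ (h t ht)) (le_refl ‖x‖)
  rw [add_sub_cancel_left, htd] at this
  linarith [le_abs_self C]

/-- Limits of normalised far-away points of an unbounded set give a recession direction. -/
lemma exists_ne_zero_forall_nonneg_of_not_isBounded [ProperSpace E]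
    (hS : ¬ Bornology.IsBounded S) :
    ∃ d : E, d ≠ 0 ∧ ∀ g : E →L[ℝ] ℝ, BddBelow (g '' S) → 0 ≤ g d := by
  have hfar : ∀ n : ℕ, ∃ p ∈ S, (n : ℝ) < ‖p‖ := by
    intro n
    by_contra! h
    exact hS (isBounded_iff_forall_norm_le.2 ⟨n, h⟩)
  choose p hpS hp using hfar
  have hp0 : ∀ n, 0 < ‖p n‖ := fun n => (Nat.cast_nonneg n).trans_lt (hp n)
  have hsphere : ∀ n, ‖p n‖⁻¹ • p n ∈ Metric.sphere (0 : E) 1 := fun n => by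
    rw [mem_sphere_zero_iff_norm, norm_smul, norm_inv, norm_norm, inv_mul_cancel₀ (hp0 n).ne']
  obtain ⟨d, hd, φ, hφ, hlim⟩ := (isCompact_sphere (0 : E) 1).tendsto_subseq hsphere
  refine ⟨d, ne_zero_of_mem_unit_sphere ⟨d, hd⟩, fun g ⟨C, hC⟩ => ?_⟩
  have hinv : Tendsto (fun k => ‖p (φ k)‖⁻¹) atTop (𝓝 0) :=
    tendsto_inv_atTop_zero.comp ((tendsto_atTop_mono (fun n => (hp n).le)
      tendsto_natCast_atTop_atTop).comp hφ.tendsto_atTop)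
  refine le_of_tendsto_of_tendsto' (by simpa using hinv.mul_const C)
    ((g.continuous.tendsto d).comp hlim) fun k => ?_
  simp only [Function.comp_apply, map_smul, smul_eq_mul]
  exact mul_le_mul_of_nonneg_left (hC (mem_image_of_mem g (hpS _))) (inv_nonneg.2 (hp0 _).le)

end Recession

section Directions

variable {L : Finset Line2} {x : ℝ × ℝ}

lemma exists_dir_of_not_isBounded_sameSide (h : ¬ Bornology.IsBounded (sameSide L x)) :
    ∃ d : ℝ × ℝ, d ≠ 0 ∧ ∀ ℓ ∈ L, 0 ≤ ℓ.eval x * dot2 ℓ.normal d := by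
  obtain ⟨d, hd, hg⟩ := exists_ne_zero_forall_nonneg_of_not_isBounded h
  refine ⟨d, hd, fun ℓ hℓ => hg (ℓ.eval x • dot2 ℓ.normal) ⟨ℓ.eval x * ℓ.c, ?_⟩⟩
  rintro _ ⟨p, hp, rfl⟩
  have := hp ℓ hℓ
  simp only [Line2.eval, FunLike.coe_smul, Pi.smul_apply, smul_eq_mul] at this ⊢
  linarith

lemma exists_mul_dot2_neg_of_isBounded_sameSide (hx : x ∉ linesUnion L)
    (hb : Bornology.IsBounded (sameSide L x)) {d : ℝ × ℝ} (hd : d ≠ 0) :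
    ∃ ℓ ∈ L, ℓ.eval x * dot2 ℓ.normal d < 0 := by
  by_contra! h
  refine not_isBounded_of_forall_add_smul_mem (S := sameSide L x) (x := x) hd
    (fun t ht ℓ hℓ => ?_) hb
  rw [ℓ.eval_add_smul]
  nlinarith [mem_sameSide_self hx ℓ hℓ, mul_nonneg ht (h ℓ hℓ)]

end Directions

open AffineMap in
lemma exists_segment_superset_lineMap {E : Type*} [AddCommGroup E] [Module ℝ E] (x y : E)
    (s t : ℝ) : ∃ a ∈ ({0, 1, s, t} : Finset ℝ), ∃ b ∈ ({0, 1, s, t} : Finset ℝ),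
      segment ℝ x y ⊆ segment ℝ (lineMap x y a) (lineMap x y b) ∧
      segment ℝ (lineMap x y s) (lineMap x y t) ⊆ segment ℝ (lineMap x y a) (lineMap x y b) := by
  set T : Finset ℝ := {0, 1, s, t}
  have hT : T.Nonempty := ⟨0, by simp [T]⟩
  have hsub : ∀ r ∈ T, ∀ r' ∈ T, segment ℝ (lineMap x y r) (lineMap x y r') ⊆
      segment ℝ (lineMap x y (T.min' hT)) (lineMap x y (T.max' hT)) := by
    have hIcc : ∀ r ∈ T, r ∈ segment ℝ (T.min' hT) (T.max' hT) := fun r hr => by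
      rw [segment_eq_Icc (T.min'_le_max' hT)]
      exact ⟨T.min'_le r hr, T.le_max' r hr⟩
    intro r hr r' hr'
    rw [← image_segment, ← image_segment]
    exact image_mono ((convex_segment _ _).segment_subset (hIcc r hr) (hIcc r' hr'))
  refine ⟨T.min' hT, T.min'_mem hT, T.max' hT, T.max'_mem hT, ?_,
    hsub s (by simp [T]) t (by simp [T])⟩
  simpa using hsub 0 (by simp [T]) 1 (by simp [T])

/-- Two edges of a closed convex set on a common line `ℓ`, all of whose points in the set are
boundary points, both equal the segment spanned by their four endpoints. -/
lemma IsEdge.eq_of_subset_carrier {K e₁ e₂ : Set (ℝ × ℝ)} {ℓ : Line2} (hKc : IsClosed K)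
    (hK : Convex ℝ K) (hfr : K ∩ ℓ.carrier ⊆ frontier K) (he₁ : IsEdge K e₁)
    (he₂ : IsEdge K e₂) (h₁ : e₁ ⊆ ℓ.carrier) (h₂ : e₂ ⊆ ℓ.carrier) : e₁ = e₂ := by
  obtain ⟨x, y, hxy, rfl, hfr₁, hmax₁⟩ := he₁
  obtain ⟨x', y', -, rfl, hfr₂, hmax₂⟩ := he₂
  have hgood : ∀ {u v : ℝ × ℝ}, segment ℝ u v ⊆ frontier K → segment ℝ u v ⊆ ℓ.carrier →
      u ∈ K ∩ ℓ.carrier ∧ v ∈ K ∩ ℓ.carrier := fun hf hℓ =>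
    ⟨⟨hKc.frontier_subset (hf (left_mem_segment ..)), hℓ (left_mem_segment ..)⟩,
      ⟨hKc.frontier_subset (hf (right_mem_segment ..)), hℓ (right_mem_segment ..)⟩⟩
  obtain ⟨hx, hy⟩ := hgood hfr₁ h₁
  obtain ⟨hx', hy'⟩ := hgood hfr₂ h₂
  obtain ⟨s, rfl⟩ := ℓ.exists_lineMap_eq hxy hx.2 hy.2 hx'.2
  obtain ⟨t, rfl⟩ := ℓ.exists_lineMap_eq hxy hx.2 hy.2 hy'.2
  obtain ⟨a, ha, b, hb, hsub₁, hsub₂⟩ := exists_segment_superset_lineMap x y s t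
  have hend : ∀ r ∈ ({0, 1, s, t} : Finset ℝ), AffineMap.lineMap x y r ∈ K ∩ ℓ.carrier := by
    intro r hr
    simp only [Finset.mem_insert, Finset.mem_singleton] at hr
    rcases hr with rfl | rfl | rfl | rfl <;> simpa
  have hsub : segment ℝ (AffineMap.lineMap x y a) (AffineMap.lineMap x y b) ⊆ frontier K :=
    ((hK.inter ℓ.convex_carrier).segment_subset (hend a ha) (hend b hb)).trans hfr
  exact (hmax₁ _ _ hsub₁ hsub).symm.trans (hmax₂ _ _ hsub₂ hsub)

/-- A line not containing the segment meets it at most once, and finitely many points cannot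
cover it. -/
lemma exists_segment_subset_carrier {L : Finset Line2} {x y : ℝ × ℝ}
    (h : segment ℝ x y ⊆ linesUnion L) : ∃ ℓ ∈ L, segment ℝ x y ⊆ ℓ.carrier := by
  by_contra! hc
  have hsingle : ∀ ℓ ∈ L, {t : ℝ | AffineMap.lineMap x y t ∈ ℓ.carrier}.Subsingleton := by
    intro ℓ hℓ t ht t' ht'
    by_contra htt'
    simp only [mem_ofPred_eq, ℓ.mem_carrier_iff, ℓ.eval_lineMap] at ht ht'
    have hyx : ℓ.eval y = ℓ.eval x := by
      have : (t - t') * (ℓ.eval y - ℓ.eval x) = 0 := by linear_combination ht - ht'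
      simpa [sub_eq_zero, htt'] using this
    have hx : ℓ.eval x = 0 := by linear_combination ht - t * hyx
    have hy : ℓ.eval y = 0 := hyx.trans hx
    exact hc ℓ hℓ (ℓ.convex_carrier.segment_subset (ℓ.mem_carrier_iff.2 hx)
      (ℓ.mem_carrier_iff.2 hy))
  have hcover : Icc (0 : ℝ) 1 ⊆ ⋃ ℓ ∈ L, {t : ℝ | AffineMap.lineMap x y t ∈ ℓ.carrier} := by
    intro t ht
    have := h (segment_eq_image_lineMap ℝ x y ▸ mem_image_of_mem _ ht)
    simpa [linesUnion] using this
  exact Icc_infinite zero_lt_one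
    ((L.finite_toSet.biUnion fun ℓ hℓ => (hsingle ℓ hℓ).finite).subset hcover)

lemma IsEdge.exists_subset_carrier {L : Finset Line2} {x : ℝ × ℝ} (hx : x ∉ linesUnion L)
    {e : Set (ℝ × ℝ)} (he : IsEdge (closure (sameSide L x)) e) : ∃ ℓ ∈ L, e ⊆ ℓ.carrier := by
  obtain ⟨y, z, -, rfl, hfr, -⟩ := he
  exact exists_segment_subset_carrier (hfr.trans (frontier_closure_sameSide_subset hx))

/-- With `w j` the inward normals of the sides of a polygon, a ray in direction `d` leaves the
polygon through side `i` and through no other side. -/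
def IsEscapeDir {ι : Type*} (L : Finset ι) (w : ι → ℝ × ℝ) (i : ι) (d : ℝ × ℝ) : Prop :=
  dot2 (w i) d < 0 ∧ ∀ j ∈ L, j ≠ i → 0 ≤ dot2 (w j) d

namespace IsEscapeDir

variable {ι : Type*} {L : Finset ι} {w : ι → ℝ × ℝ}

lemma ne_zero {i : ι} {d : ℝ × ℝ} (h : IsEscapeDir L w i d) : d ≠ 0 := by
  rintro rfl
  simpa using h.1

/-- If `dⱼ = t • dᵢ`, then `t < 0`, so any other two normals are orthogonal to `dᵢ`. -/
lemma cross2_ne_zero {i j k l : ι} {dᵢ dⱼ : ℝ × ℝ} (hi : IsEscapeDir L w i dᵢ)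
    (hj : IsEscapeDir L w j dⱼ) (hiL : i ∈ L) (hij : i ≠ j) (hk : k ∈ L)
    (hl : l ∈ L) (hki : k ≠ i) (hkj : k ≠ j) (hli : l ≠ i) (hlj : l ≠ j)
    (hkl : cross2 (w k) (w l) ≠ 0) : cross2 dᵢ dⱼ ≠ 0 := by
  intro h0
  have hdᵢ := hi.ne_zero
  obtain ⟨t, rfl⟩ := exists_eq_smul_of_cross2_eq_zero hdᵢ h0
  simp only [IsEscapeDir, map_smul, smul_eq_mul] at hi hj
  have ht : t < 0 := (nonpos_of_mul_nonneg_left (hj.2 i hiL hij) hi.1).lt_of_ne (by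
    rintro rfl
    simpa using hj.1)
  have horth : ∀ m ∈ L, m ≠ i → m ≠ j → dot2 (w m) dᵢ = 0 := fun m hm hmi hmj =>
    le_antisymm (nonpos_of_mul_nonneg_right (hj.2 m hm hmj) ht) (hi.2 m hm hmi)
  exact hkl (cross2_eq_zero_of_dot2_eq_zero hdᵢ (horth k hk hki hkj) (horth l hl hli hlj))

lemma false_of_three {i₁ i₂ i₃ i₄ : ι} {d₁ d₂ d₃ : ℝ × ℝ}
    (hw : ∀ i ∈ L, ∀ j ∈ L, i ≠ j → cross2 (w i) (w j) ≠ 0)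
    (h₁ : IsEscapeDir L w i₁ d₁) (h₂ : IsEscapeDir L w i₂ d₂) (h₃ : IsEscapeDir L w i₃ d₃)
    (hi₁ : i₁ ∈ L) (hi₂ : i₂ ∈ L) (hi₃ : i₃ ∈ L) (hi₄ : i₄ ∈ L) (h₁₂ : i₁ ≠ i₂)
    (h₁₃ : i₁ ≠ i₃) (h₂₃ : i₂ ≠ i₃) (h₁₄ : i₁ ≠ i₄) (h₂₄ : i₂ ≠ i₄) (h₃₄ : i₃ ≠ i₄) : False := by
  have γ₁ := h₂.cross2_ne_zero h₃ hi₂ h₂₃ hi₁ hi₄ h₁₂ h₁₃ h₂₄.symm h₃₄.symm (hw _ hi₁ _ hi₄ h₁₄)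
  have γ₂ := h₃.cross2_ne_zero h₁ hi₃ h₁₃.symm hi₂ hi₄ h₂₃ h₁₂.symm h₃₄.symm h₁₄.symm
    (hw _ hi₂ _ hi₄ h₂₄)
  have γ₃ := h₁.cross2_ne_zero h₂ hi₁ h₁₂ hi₃ hi₄ h₁₃.symm h₂₃.symm h₁₄.symm h₂₄.symm
    (hw _ hi₃ _ hi₄ h₃₄)
  have e₁ := cross2_mul_dot2_add d₁ d₂ d₃ (w i₁)
  have e₂ := cross2_mul_dot2_add d₁ d₂ d₃ (w i₂)
  have e₃ := cross2_mul_dot2_add d₁ d₂ d₃ (w i₃)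
  have e₄ := cross2_mul_dot2_add d₁ d₂ d₃ (w i₄)
  have a₂₁ := h₁.2 i₂ hi₂ h₁₂.symm
  have a₃₁ := h₁.2 i₃ hi₃ h₁₃.symm
  have a₁₂ := h₂.2 i₁ hi₁ h₁₂
  have a₃₂ := h₂.2 i₃ hi₃ h₂₃.symm
  have a₁₃ := h₃.2 i₁ hi₁ h₁₃
  have a₂₃ := h₃.2 i₂ hi₂ h₂₃
  have a₁₁ := h₁.1
  have a₂₂ := h₂.1
  have a₃₃ := h₃.1
  have hsame : (0 < cross2 d₂ d₃ ∧ 0 < cross2 d₃ d₁ ∧ 0 < cross2 d₁ d₂) ∨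
      (cross2 d₂ d₃ < 0 ∧ cross2 d₃ d₁ < 0 ∧ cross2 d₁ d₂ < 0) := by
    rcases γ₁.lt_or_gt with g₁ | g₁ <;> rcases γ₂.lt_or_gt with g₂ | g₂ <;>
      rcases γ₃.lt_or_gt with g₃ | g₃ <;>
      first | exact .inl ⟨g₁, g₂, g₃⟩ | exact .inr ⟨g₁, g₂, g₃⟩ | (exfalso; nlinarith)
  have a₄₁ := h₁.2 i₄ hi₄ h₁₄.symm
  have a₄₂ := h₂.2 i₄ hi₄ h₂₄.symm
  have a₄₃ := h₃.2 i₄ hi₄ h₃₄.symm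
  have hw₄ : dot2 (w i₄) d₁ = 0 ∧ dot2 (w i₄) d₂ = 0 := by
    rcases hsame with ⟨g₁, g₂, g₃⟩ | ⟨g₁, g₂, g₃⟩ <;> constructor <;> nlinarith
  refine hw _ hi₁ _ hi₄ h₁₄ ?_
  rw [eq_zero_of_dot2_eq_zero γ₃ hw₄.1 hw₄.2]
  simp [cross2]

lemma ncard_le_two (hw : ∀ i ∈ L, ∀ j ∈ L, i ≠ j → cross2 (w i) (w j) ≠ 0)
    (hL : 4 ≤ L.card) : {i | i ∈ L ∧ ∃ d, IsEscapeDir L w i d}.ncard ≤ 2 := by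
  classical
  by_contra! h
  obtain ⟨i₁, i₂, i₃, ⟨hi₁, d₁, h₁⟩, ⟨hi₂, d₂, h₂⟩, ⟨hi₃, d₃, h₃⟩, h₁₂, h₁₃, h₂₃⟩ :=
    (two_lt_ncard_iff (L.finite_toSet.subset fun i hi => hi.1)).1 h
  obtain ⟨i₄, hi₄, hi₄'⟩ := Finset.exists_mem_notMem_of_card_lt_card
    ((Finset.card_le_three (a := i₁) (b := i₂) (c := i₃)).trans_lt hL)
  simp only [Finset.mem_insert, Finset.mem_singleton, not_or] at hi₄'
  exact false_of_three hw h₁ h₂ h₃ hi₁ hi₂ hi₃ hi₄ h₁₂ h₁₃ h₂₃ (Ne.symm hi₄'.1)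
    (Ne.symm hi₄'.2.1) (Ne.symm hi₄'.2.2)

end IsEscapeDir

lemma CriticalEdge.exists_isEscapeDir {L : Finset Line2}
    (hL : ∀ ℓ₁ ∈ L, ∀ ℓ₂ ∈ L, ℓ₁ ≠ ℓ₂ → ¬ ℓ₁.Parallel ℓ₂) {x : ℝ × ℝ} (hx : x ∉ linesUnion L)
    (hb : Bornology.IsBounded (sameSide L x)) {e : Set (ℝ × ℝ)}
    (he : CriticalEdge L (sameSide L x) e) :
    ∃ ℓ ∈ L, e ⊆ ℓ.carrier ∧ ∃ d, IsEscapeDir L (fun m => m.eval x • m.normal) ℓ d := by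
  obtain ⟨hedge, C, ⟨y, hy, rfl⟩, hCub, hCe⟩ := he
  rw [connectedComponentIn_compl_linesUnion hy] at hCub hCe
  obtain ⟨ℓ, hℓ, heℓ⟩ := hedge.exists_subset_carrier hx
  obtain ⟨p, q, hpq, rfl, hfr, -⟩ := hedge
  obtain ⟨d, hd, hdC⟩ := exists_dir_of_not_isBounded_sameSide hCub
  have hside : ∀ m ∈ L, m ≠ ℓ → 0 ≤ m.eval x * dot2 m.normal d := by
    intro m hm hmℓ
    obtain ⟨z, hz, hzm⟩ : ∃ z ∈ segment ℝ p q, m.eval z ≠ 0 := by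
      by_contra! h
      exact hL ℓ hℓ m hm hmℓ.symm (Line2.parallel_of_mem_of_mem hpq
        (heℓ (left_mem_segment ..)) (heℓ (right_mem_segment ..))
        (m.mem_carrier_iff.2 (h p (left_mem_segment ..)))
        (m.mem_carrier_iff.2 (h q (right_mem_segment ..))))
    have hxz := mul_eval_pos_of_mem_closure hx hm (isClosed_closure.frontier_subset (hfr hz)) hzm
    have hyz := mul_eval_pos_of_mem_closure hy hm (hCe hz) hzm
    have hxy : 0 < m.eval x * m.eval y := by nlinarith [mul_pos hxz hyz, mul_self_pos.2 hzm]
    nlinarith [hdC m hm]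
  refine ⟨ℓ, hℓ, heℓ, d, ?_, fun m hm hmℓ => ?_⟩
  · obtain ⟨m, hm, hneg⟩ := exists_mul_dot2_neg_of_isBounded_sameSide hx hb hd
    obtain rfl : m = ℓ := by
      by_contra hmℓ
      exact (hside m hm hmℓ).not_gt hneg
    rwa [dot2_smul_left]
  · rw [dot2_smul_left]
    exact hside m hm hmℓ

theorem stmt17_general (L : Finset Line2) (hL : IsSimpleArrangement L) (hn : 4 ≤ L.card)
    (P : Set (ℝ × ℝ)) (hP : IsCell L P)
    (hPb : Bornology.IsBounded P) :
    {e : Set (ℝ × ℝ) | CriticalEdge L P e}.ncard ≤ 2 := by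
  obtain ⟨x, hx, rfl⟩ := hP
  rw [connectedComponentIn_compl_linesUnion hx] at hPb ⊢
  set w : Line2 → ℝ × ℝ := fun m => m.eval x • m.normal
  have hw : ∀ ℓ ∈ L, ∀ m ∈ L, ℓ ≠ m → cross2 (w ℓ) (w m) ≠ 0 := fun ℓ hℓ m hm hℓm => by
    rw [cross2_smul_smul]
    exact mul_ne_zero (mul_ne_zero (ℓ.eval_ne_zero hℓ hx) (m.eval_ne_zero hm hx))
      (Line2.cross2_normal_ne_zero (hL.1 ℓ hℓ m hm hℓm))
  have : Nonempty Line2 := ⟨⟨1, 0, 0, by simp⟩⟩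
  choose! f hfL hfe hfd using fun e (he : CriticalEdge L (sameSide L x) e) =>
    he.exists_isEscapeDir hL.1 hx hPb
  have hinj : InjOn f {e | CriticalEdge L (sameSide L x) e} := fun e₁ he₁ e₂ he₂ h =>
    he₁.1.eq_of_subset_carrier isClosed_closure convex_sameSide.closure
      (closure_sameSide_inter_carrier_subset_frontier hx (hfL e₁ he₁)) he₂.1 (hfe e₁ he₁)
      (h ▸ hfe e₂ he₂)
  calc {e | CriticalEdge L (sameSide L x) e}.ncard
      ≤ {ℓ | ℓ ∈ L ∧ ∃ d, IsEscapeDir L w ℓ d}.ncard :=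
        ncard_le_ncard_of_injOn f (fun e he => ⟨hfL e he, hfd e he⟩) hinj
          (L.finite_toSet.subset fun _ h => h.1)
    _ ≤ 2 := IsEscapeDir.ncard_le_two hw hn

/-- Let `P` be a bounded convex cell of a simple arrangement `L` of at least 4
lines, each line of `L` supporting an edge of `P` (so `L` is the arrangement of
the `≥ 4` lines supporting the edges of the convex polygon `P`, which hence has
at least 4 edges).  Then at most 2 edges of `P` are critical. -/
theorem stmt17 (L : Finset Line2) (hL : IsSimpleArrangement L) (hn : 4 ≤ L.card)
    (P : Set (ℝ × ℝ)) (hP : IsCell L P) (hPconv : Convex ℝ P)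
    (hPb : Bornology.IsBounded P)
    (hsupp : ∀ ℓ ∈ L, ∃ e : Set (ℝ × ℝ), IsEdge (closure P) e ∧ e ⊆ ℓ.carrier) :
    {e : Set (ℝ × ℝ) | CriticalEdge L P e}.ncard ≤ 2 :=
  stmt17_general L hL hn P hP hPb
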